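/- (Sandwich lemma.) Let f: [0,1] → X and suppose there exist an (o)-sequence (b_n) such that for every n there are order-McShane integrable functions g_1, g_2: [0,1] → X, with a common regulating (o)-sequence (β_n), satisfying g_1 ≤ f ≤ g_2 pointwise and (oM)∫ g_2 dλ ≤ (oM)∫ g_1 dλ + b_n. Then f is order-McShane integrable. -/

import Mathlib

open MeasureTheory Set Filter

/-- A tagged partition of the set `A`: finitely many pairwise disjoint measurable
sets covering `A`, each with a tag point. -/
structure TaggedPart (T : Type*) [MeasurableSpace T] (A : Set T) where
  k : ℕ
  E : Fin k → Set T
  tag : Fin k → T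
  meas : ∀ i, MeasurableSet (E i)
  disj : ∀ i j, i ≠ j → Disjoint (E i) (E j)
  cover : (⋃ i, E i) = A

namespace TaggedPart

variable {T : Type*} [MeasurableSpace T] {A : Set T}

/-- A Henstock partition: each tag belongs to its set. -/
def IsHenstock (P : TaggedPart T A) : Prop := ∀ i, P.tag i ∈ P.E i

/-- `γ`-fineness: each set is within distance `γ (tag)` of its tag. -/
def IsFine [PseudoMetricSpace T] (γ : T → ℝ) (P : TaggedPart T A) : Prop :=
  ∀ i, ∀ w ∈ P.E i, dist w (P.tag i) < γ (P.tag i)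

/-- The Riemann sum `σ(f, P) = ∑ μ(Eᵢ) • f(tᵢ)`. -/
noncomputable def sum {X : Type*} [AddCommMonoid X] [Module ℝ X]
    (P : TaggedPart T A) (f : T → X) (μ : Measure T) : X :=
  ∑ i, (μ (P.E i)).toReal • f (P.tag i)

end TaggedPart

/-- A gage is a strictly positive function. -/
def IsGage {T : Type*} (γ : T → ℝ) : Prop := ∀ t, 0 < γ t

/-- An (o)-sequence: decreasing with infimum `0`. -/
def IsOSeq {X : Type*} [Lattice X] [AddCommGroup X] (b : ℕ → X) : Prop :=
  Antitone b ∧ IsGLB (Set.range b) 0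

section Defs

variable {T : Type*} [MeasurableSpace T] [PseudoMetricSpace T]
  {X : Type*} [NormedAddCommGroup X] [Lattice X] [HasSolidNorm X] [IsOrderedAddMonoid X] [NormedSpace ℝ X]

/-- Order-Henstock integrability of `f` on `A` with integral `J`. -/
def HasOHIntegralOn (f : T → X) (μ : Measure T) (A : Set T) (J : X) : Prop :=
  ∃ b : ℕ → X, IsOSeq b ∧ ∃ γ : ℕ → T → ℝ, (∀ n, IsGage (γ n)) ∧
    ∀ n (P : TaggedPart T A), P.IsHenstock → P.IsFine (γ n) →
      |P.sum f μ - J| ≤ b n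

/-- Order-McShane (free partition) integrability of `f` on `A` with integral `J`. -/
def HasOMIntegralOn (f : T → X) (μ : Measure T) (A : Set T) (J : X) : Prop :=
  ∃ b : ℕ → X, IsOSeq b ∧ ∃ γ : ℕ → T → ℝ, (∀ n, IsGage (γ n)) ∧
    ∀ n (P : TaggedPart T A), P.IsFine (γ n) → |P.sum f μ - J| ≤ b n

/-- Order-McShane integrability with a prescribed regulating (o)-sequence `b`. -/
def HasOMIntegralOnWith (f : T → X) (μ : Measure T) (A : Set T) (J : X)
    (b : ℕ → X) : Prop :=
  ∃ γ : ℕ → T → ℝ, (∀ n, IsGage (γ n)) ∧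
    ∀ n (P : TaggedPart T A), P.IsFine (γ n) → |P.sum f μ - J| ≤ b n

/-- Norm-Henstock integrability of `f` on `A` with integral `J`. -/
def HasNormHIntegralOn (f : T → X) (μ : Measure T) (A : Set T) (J : X) : Prop :=
  ∀ ε : ℝ, 0 < ε → ∃ γ : T → ℝ, IsGage γ ∧
    ∀ P : TaggedPart T A, P.IsHenstock → P.IsFine γ → ‖P.sum f μ - J‖ ≤ ε

/-- Norm-McShane (free partition) integrability of `f` on `A` with integral `J`. -/
def HasNormMIntegralOn (f : T → X) (μ : Measure T) (A : Set T) (J : X) : Prop :=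
  ∀ ε : ℝ, 0 < ε → ∃ γ : T → ℝ, IsGage γ ∧
    ∀ P : TaggedPart T A, P.IsFine γ → ‖P.sum f μ - J‖ ≤ ε

end Defs

/-!
Once the tags of nonempty pieces are forced into `[0,1]` (by a gage equal to the distance to
`[0,1]` outside it), monotonicity of Riemann sums puts every sufficiently fine `σ(f, P)` between
`J₁ⁿ - β_m` and `J₂ⁿ + β_m`. Evaluating two such brackets on a common fine partition shows
`J₁ⁿ ≤ J₂ᵏ` for all `n, k`, so `J = sup J₁ⁿ` exists by Dedekind completeness and lies in
`[J₁ⁿ, J₂ⁿ]`, an interval of length at most `bₙ`; along the diagonal gages this gives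
`|σ(f, P) - J| ≤ bₙ + βₙ`.
-/

section LatticeGroup

variable {X : Type*} [Lattice X] [AddCommGroup X] [IsOrderedAddMonoid X]

lemma nonneg_of_two_pow_nsmul_nonneg {y : X} (k : ℕ) (hy : 0 ≤ 2 ^ k • y) : 0 ≤ y := by
  induction k generalizing y with
  | zero => simpa using hy
  | succ k ih =>
    rw [pow_succ, mul_comm, mul_nsmul] at hy
    exact nsmul_two_semiclosed (ih hy)

lemma mem_Icc_of_abs_sub_le_of_le {s₁ s s₂ J₁ J₂ e : X} (h₁ : |s₁ - J₁| ≤ e)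
    (h₂ : |s₂ - J₂| ≤ e) (hs₁ : s₁ ≤ s) (hs₂ : s ≤ s₂) : s ∈ Icc (J₁ - e) (J₂ + e) := by
  rw [abs_le', neg_sub] at h₁ h₂
  exact ⟨(sub_le_comm.1 h₁.2).trans hs₁, hs₂.trans (sub_le_iff_le_add'.1 h₂.1)⟩

lemma abs_sub_le_of_mem_Icc {s a c J d e : X} (hs : s ∈ Icc (a - e) (c + e)) (ha : a ≤ J)
    (hc : J ≤ c) (hca : c ≤ a + d) : |s - J| ≤ d + e := by
  have hd : c - a + e ≤ d + e := add_le_add_left (sub_le_iff_le_add'.2 hca) e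
  rw [abs_le', neg_sub]
  constructor
  · calc s - J ≤ c + e - a := sub_le_sub hs.2 ha
      _ = c - a + e := by abel
      _ ≤ d + e := hd
  · calc J - s ≤ c - (a - e) := sub_le_sub hc hs.1
      _ = c - a + e := by abel
      _ ≤ d + e := hd

end LatticeGroup

section NormedLattice

variable {X : Type*} [NormedAddCommGroup X] [Lattice X] [HasSolidNorm X] [IsOrderedAddMonoid X]
  [Module ℝ X] [ContinuousSMul ℝ X]

/-- The order and the scalar action are linked only through the closed positive cone: dyadic
scalars are handled by torsion-freeness, the others by passing to the limit. -/
instance HasSolidNorm.posSMulMono : PosSMulMono ℝ X := by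
  refine PosSMulMono.of_smul_nonneg fun c hc x hx => ?_
  have hdyadic : ∀ n k : ℕ, 0 ≤ ((n : ℝ) / 2 ^ k) • x := fun n k => by
    refine nonneg_of_two_pow_nsmul_nonneg k ?_
    rw [← Nat.cast_smul_eq_nsmul ℝ, smul_smul, Nat.cast_pow, Nat.cast_ofNat,
      mul_div_cancel₀ _ (by positivity), Nat.cast_smul_eq_nsmul]
    exact nsmul_nonneg hx n
  have hlim : Tendsto (fun k : ℕ => (⌊c * 2 ^ k⌋₊ : ℝ) / 2 ^ k) atTop (nhds c) :=
    (tendsto_nat_floor_mul_div_atTop hc).comp (tendsto_pow_atTop_atTop_of_one_lt one_lt_two)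
  exact (isClosed_nonneg.preimage (continuous_id.smul continuous_const)).mem_of_tendsto hlim
    (Eventually.of_forall fun k => hdyadic _ k)

end NormedLattice

namespace IsOSeq

variable {X : Type*} [Lattice X] [AddCommGroup X] {b β : ℕ → X}

lemma nonneg (hb : IsOSeq b) (n : ℕ) : 0 ≤ b n :=
  hb.2.1 ⟨n, rfl⟩

variable [IsOrderedAddMonoid X]

lemma le_of_forall_le_add (hb : IsOSeq b) {x y : X} (h : ∀ n, x ≤ y + b n) : x ≤ y :=
  sub_nonpos.1 <| hb.2.2 <| forall_mem_range.2 fun n => sub_le_iff_le_add'.2 (h n)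

lemma add (hb : IsOSeq b) (hβ : IsOSeq β) : IsOSeq (b + β) := by
  refine ⟨hb.1.add hβ.1, forall_mem_range.2 fun n => add_nonneg (hb.nonneg n) (hβ.nonneg n),
    fun y hy => ?_⟩
  have hmix : ∀ n k, y ≤ β k + b n := fun n k => calc
    y ≤ b (max n k) + β (max n k) := hy ⟨max n k, rfl⟩
    _ ≤ b n + β k := add_le_add (hb.1 (le_max_left n k)) (hβ.1 (le_max_right n k))
    _ = β k + b n := add_comm _ _
  refine hβ.le_of_forall_le_add fun k => ?_
  rw [zero_add]
  exact hb.le_of_forall_le_add (hmix · k)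

end IsOSeq

namespace TaggedPart

variable {T : Type*} [MeasurableSpace T] {A : Set T}

lemma E_subset (P : TaggedPart T A) (i : Fin P.k) : P.E i ⊆ A :=
  (subset_iUnion P.E i).trans P.cover.subset

lemma sum_mono {X : Type*} [AddCommMonoid X] [PartialOrder X] [IsOrderedAddMonoid X]
    [Module ℝ X] [PosSMulMono ℝ X] (P : TaggedPart T A) (μ : Measure T) {S : Set T}
    (htag : ∀ i, (P.E i).Nonempty → P.tag i ∈ S) {g g' : T → X} (h : ∀ t ∈ S, g t ≤ g' t) :
    P.sum g μ ≤ P.sum g' μ := by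
  refine Finset.sum_le_sum fun i _ => ?_
  rcases (P.E i).eq_empty_or_nonempty with hi | hi
  · simp [hi]
  · exact smul_le_smul_of_nonneg_left (h _ (htag i hi)) ENNReal.toReal_nonneg

variable [PseudoMetricSpace T]

lemma IsFine.mono {γ γ' : T → ℝ} {P : TaggedPart T A} (hP : P.IsFine γ)
    (h : ∀ t, γ t ≤ γ' t) : P.IsFine γ' :=
  fun i w hw => (hP i w hw).trans_le (h _)

lemma exists_isFine [OpensMeasurableSpace T] (hA : IsCompact A) (hAm : MeasurableSet A)
    {γ : T → ℝ} (hγ : IsGage γ) : ∃ P : TaggedPart T A, P.IsFine γ := by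
  obtain ⟨s, hs⟩ := hA.elim_finite_subcover (fun t => Metric.ball t (γ t))
    (fun _ => Metric.isOpen_ball) (fun x _ => mem_iUnion.2 ⟨x, Metric.mem_ball_self (hγ x)⟩)
  let t : Fin s.card → T := fun i => s.equivFin.symm i
  let B : Fin s.card → Set T := fun i => A ∩ Metric.ball (t i) (γ (t i))
  have hB : (⋃ i, B i) = A := by
    refine (iUnion_subset fun i => inter_subset_left).antisymm fun x hx => ?_
    obtain ⟨y, hy, hxy⟩ := mem_iUnion₂.1 (hs hx)
    exact mem_iUnion.2 ⟨s.equivFin ⟨y, hy⟩, hx, by simpa [t] using hxy⟩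
  have hBm : ∀ i, MeasurableSet (B i) := fun i => hAm.inter measurableSet_ball
  refine ⟨⟨s.card, disjointed B, t,
    fun i => disjointedRec (fun _ _ ht => ht.diff (hBm _)) (hBm i),
    fun i j hij => disjoint_disjointed B hij, iUnion_disjointed.trans hB⟩, fun i w hw => ?_⟩
  exact (disjointed_subset B i hw).2

lemma exists_isGage_tag_mem (hA : IsClosed A) (hne : A.Nonempty) :
    ∃ γ₀ : T → ℝ, IsGage γ₀ ∧ ∀ (γ : T → ℝ) (P : TaggedPart T A), P.IsFine γ →
      (∀ t, γ t ≤ γ₀ t) → ∀ i, (P.E i).Nonempty → P.tag i ∈ A := by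
  classical
  refine ⟨fun t => if t ∈ A then 1 else Metric.infDist t A, fun t => ?_, ?_⟩
  · beta_reduce
    split_ifs with ht
    · exact one_pos
    · exact (hA.notMem_iff_infDist_pos hne).1 ht
  · rintro γ P hP hγ i ⟨w, hw⟩
    by_contra ht
    have hnear : dist w (P.tag i) < Metric.infDist (P.tag i) A := by
      simpa [ht] using (hP i w hw).trans_le (hγ (P.tag i))
    have hfar : Metric.infDist (P.tag i) A ≤ dist w (P.tag i) :=
      dist_comm w (P.tag i) ▸ Metric.infDist_le_dist_of_mem (P.E_subset i hw)
    exact hnear.not_ge hfar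

end TaggedPart

section RiemannSums

variable {T : Type*} [MeasurableSpace T] [PseudoMetricSpace T] {A : Set T} {μ : Measure T}

lemma le_of_forall_isFine_sum_bounds {X : Type*} [Lattice X] [AddCommGroup X]
    [IsOrderedAddMonoid X] [Module ℝ X] [OpensMeasurableSpace T] (hA : IsCompact A)
    (hAm : MeasurableSet A) {β : ℕ → X} (hβ : IsOSeq β) {δ δ' : ℕ → T → ℝ}
    (hδ : ∀ m, IsGage (δ m)) (hδ' : ∀ m, IsGage (δ' m)) {f : T → X} {a c : X}
    (hlow : ∀ m (P : TaggedPart T A), P.IsFine (δ m) → a - β m ≤ P.sum f μ)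
    (hupp : ∀ m (P : TaggedPart T A), P.IsFine (δ' m) → P.sum f μ ≤ c + β m) : a ≤ c := by
  refine (hβ.add hβ).le_of_forall_le_add fun m => ?_
  obtain ⟨P, hP⟩ := TaggedPart.exists_isFine hA hAm fun t => lt_min (hδ m t) (hδ' m t)
  have hσ := (hlow m P (hP.mono fun _ => min_le_left _ _)).trans
    (hupp m P (hP.mono fun _ => min_le_right _ _))
  rw [Pi.add_apply, ← add_assoc]
  exact sub_le_iff_le_add.1 hσ

variable {X : Type*} [NormedAddCommGroup X] [Lattice X] [HasSolidNorm X] [IsOrderedAddMonoid X]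
  [NormedSpace ℝ X]

lemma exists_isGage_sum_mem_Icc_of_sandwich (hA : IsClosed A) (hne : A.Nonempty)
    {f g₁ g₂ : T → X} {J₁ J₂ : X} {β : ℕ → X} (h₁ : HasOMIntegralOnWith g₁ μ A J₁ β)
    (h₂ : HasOMIntegralOnWith g₂ μ A J₂ β) (hfg : ∀ t ∈ A, g₁ t ≤ f t ∧ f t ≤ g₂ t) :
    ∃ δ : ℕ → T → ℝ, (∀ m, IsGage (δ m)) ∧
      ∀ m (P : TaggedPart T A), P.IsFine (δ m) → P.sum f μ ∈ Icc (J₁ - β m) (J₂ + β m) := by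
  obtain ⟨γ₁, hγ₁, hσ₁⟩ := h₁
  obtain ⟨γ₂, hγ₂, hσ₂⟩ := h₂
  obtain ⟨γ₀, hγ₀, htag⟩ := TaggedPart.exists_isGage_tag_mem hA hne
  refine ⟨fun m t => min (min (γ₁ m t) (γ₂ m t)) (γ₀ t),
    fun m t => lt_min (lt_min (hγ₁ m t) (hγ₂ m t)) (hγ₀ t), fun m P hP => ?_⟩
  have hPA := htag _ P hP fun _ => min_le_right _ _
  exact mem_Icc_of_abs_sub_le_of_le
    (hσ₁ m P (hP.mono fun _ => (min_le_left _ _).trans (min_le_left _ _)))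
    (hσ₂ m P (hP.mono fun _ => (min_le_left _ _).trans (min_le_right _ _)))
    (P.sum_mono μ hPA fun t ht => (hfg t ht).1) (P.sum_mono μ hPA fun t ht => (hfg t ht).2)

end RiemannSums

theorem oM_sandwich_lemma_general
    {X : Type*} [NormedAddCommGroup X] [Lattice X] [HasSolidNorm X] [IsOrderedAddMonoid X] [NormedSpace ℝ X]
    (hDC : ∀ s : Set X, s.Nonempty → BddAbove s → ∃ x, IsLUB s x) (f : ℝ → X) (b β : ℕ → X) (hb : IsOSeq b) (hβ : IsOSeq β)
    (h : ∀ n : ℕ, ∃ g₁ g₂ : ℝ → X, ∃ J₁ J₂ : X,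
      HasOMIntegralOnWith g₁ volume (Set.Icc 0 1) J₁ β ∧
      HasOMIntegralOnWith g₂ volume (Set.Icc 0 1) J₂ β ∧
      (∀ t ∈ Set.Icc (0:ℝ) 1, g₁ t ≤ f t ∧ f t ≤ g₂ t) ∧
      J₂ ≤ J₁ + b n) :
    ∃ J : X, HasOMIntegralOn f volume (Set.Icc 0 1) J := by
  choose g₁ g₂ J₁ J₂ hg₁ hg₂ hfg hJ using h
  choose δ hδ hσ using fun n => exists_isGage_sum_mem_Icc_of_sandwich isClosed_Icc
    (nonempty_Icc.2 zero_le_one) (hg₁ n) (hg₂ n) (hfg n)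
  have hJ₁₂ : ∀ n k, J₁ n ≤ J₂ k := fun n k =>
    le_of_forall_isFine_sum_bounds isCompact_Icc measurableSet_Icc hβ (hδ n) (hδ k)
      (fun m P hP => (hσ n m P hP).1) (fun m P hP => (hσ k m P hP).2)
  obtain ⟨J, hJ_ub, hJ_lub⟩ :=
    hDC (range J₁) (range_nonempty J₁) ⟨J₂ 0, forall_mem_range.2 (hJ₁₂ · 0)⟩
  refine ⟨J, b + β, hb.add hβ, fun n => δ n n, fun n => hδ n n, fun n P hP => ?_⟩
  exact abs_sub_le_of_mem_Icc (hσ n n P hP) (hJ_ub ⟨n, rfl⟩)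
    (hJ_lub (forall_mem_range.2 (hJ₁₂ · n))) (hJ n)

theorem oM_sandwich_lemma
    {X : Type*} [NormedAddCommGroup X] [Lattice X] [HasSolidNorm X] [IsOrderedAddMonoid X] [NormedSpace ℝ X] [CompleteSpace X]
    (hDC : ∀ s : Set X, s.Nonempty → BddAbove s → ∃ x, IsLUB s x) (f : ℝ → X) (b β : ℕ → X) (hb : IsOSeq b) (hβ : IsOSeq β)
    (h : ∀ n : ℕ, ∃ g₁ g₂ : ℝ → X, ∃ J₁ J₂ : X,
      HasOMIntegralOnWith g₁ volume (Set.Icc 0 1) J₁ β ∧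
      HasOMIntegralOnWith g₂ volume (Set.Icc 0 1) J₂ β ∧
      (∀ t ∈ Set.Icc (0:ℝ) 1, g₁ t ≤ f t ∧ f t ≤ g₂ t) ∧
      J₂ ≤ J₁ + b n) :
    ∃ J : X, HasOMIntegralOn f volume (Set.Icc 0 1) J :=
  oM_sandwich_lemma_general hDC f b β hb hβ h
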